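/- Let Z be standard normal, X_z = (Z - z conditioned on Z > z), and m(z) = E[X_z]. Then the rescaled variables X_z / m(z) converge in distribution as z → ∞ to the exponential random variable with mean 1. -/

import Mathlib

open MeasureTheory Set Filter Topology

/-! Write `φ t = exp (-t²/2)`, `Φ̄ z = ∫_z^∞ φ` and `M = Φ̄ / φ` (the Mills ratio). The survival
function of `X_z` at `a` is `Φ̄ (a + z) / Φ̄ z`. Comparing `φ` with the derivatives of
`φ t (1/t - 1/t³)` and `φ t (1/t - 1/t³ + 3/t⁵)` gives `1/z - 1/z³ ≤ M z ≤ 1/z - 1/z³ + 3/z⁵`,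
so `z M z → 1` and `z m z = z (1 / M z - z) → 1`. For `a = x m z` we then have `z a → x`, and
`Φ̄ (a + z) / Φ̄ z` is `φ (a + z) / φ z = exp (-z a - a²/2) → exp (-x)` times the ratio of the
values of `t M t` at `a + z` and at `z`, and `z / (a + z)`, both of which tend to `1`. -/

/-- The density on `(0,∞)` of `X_z = (Z - z | Z > z)` for a standard normal `Z`. -/
noncomputable def condDens (z x : ℝ) : ℝ :=
  Real.exp (-(x + z) ^ 2 / 2) / (∫ t in Set.Ioi z, Real.exp (-t ^ 2 / 2))

/-- The conditional mean overshoot `m z = E[X_z]`. -/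
noncomputable def condMean (z : ℝ) : ℝ :=
  Real.exp (-z ^ 2 / 2) / (∫ t in Set.Ioi z, Real.exp (-t ^ 2 / 2)) - z

lemma setIntegral_Ioi_le_of_hasDerivAt {f g g' : ℝ → ℝ} {z : ℝ}
    (hg : ∀ t ∈ Ici z, HasDerivAt g (g' t) t) (hg' : IntegrableOn g' (Ioi z))
    (hg0 : Tendsto g atTop (𝓝 0)) (hf : IntegrableOn f (Ioi z))
    (hfg : ∀ t ∈ Ioi z, f t ≤ -g' t) : ∫ t in Ioi z, f t ≤ g z :=
  calc ∫ t in Ioi z, f t ≤ ∫ t in Ioi z, -g' t :=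
        setIntegral_mono_on hf hg'.neg measurableSet_Ioi hfg
    _ = g z := by rw [integral_neg, integral_Ioi_of_hasDerivAt_of_tendsto' hg hg' hg0]; ring

lemma le_setIntegral_Ioi_of_hasDerivAt {f g g' : ℝ → ℝ} {z : ℝ}
    (hg : ∀ t ∈ Ici z, HasDerivAt g (g' t) t) (hg' : IntegrableOn g' (Ioi z))
    (hg0 : Tendsto g atTop (𝓝 0)) (hf : IntegrableOn f (Ioi z))
    (hfg : ∀ t ∈ Ioi z, -g' t ≤ f t) : g z ≤ ∫ t in Ioi z, f t :=
  calc g z = ∫ t in Ioi z, -g' t := by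
        rw [integral_neg, integral_Ioi_of_hasDerivAt_of_tendsto' hg hg' hg0]; ring
    _ ≤ ∫ t in Ioi z, f t := setIntegral_mono_on hg'.neg hf measurableSet_Ioi hfg

noncomputable def gaussTail (z : ℝ) : ℝ := ∫ t in Ioi z, Real.exp (-t ^ 2 / 2)

noncomputable def millsRatio (z : ℝ) : ℝ := gaussTail z / Real.exp (-z ^ 2 / 2)

lemma integrable_exp_neg_sq_div_two : Integrable fun t : ℝ => Real.exp (-t ^ 2 / 2) := by
  convert integrable_exp_neg_mul_sq (show (0 : ℝ) < 1 / 2 by norm_num) using 3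
  ring

lemma gaussTail_pos (z : ℝ) : 0 < gaussTail z := by
  have : NeZero (volume.restrict (Ioi z)) := ⟨by simp⟩
  exact integral_exp_pos integrable_exp_neg_sq_div_two.integrableOn

lemma tendsto_exp_neg_sq_div_two_atTop :
    Tendsto (fun t : ℝ => Real.exp (-t ^ 2 / 2)) atTop (𝓝 0) := by
  refine Real.tendsto_exp_atBot.comp ?_
  simp_rw [neg_div]
  exact tendsto_neg_atTop_atBot.comp ((tendsto_pow_atTop two_ne_zero).atTop_div_const two_pos)

lemma hasDerivAt_exp_neg_sq_div_two_mul {p : ℝ → ℝ} {p' t : ℝ} (hp : HasDerivAt p p' t) :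
    HasDerivAt (fun t => Real.exp (-t ^ 2 / 2) * p t)
      (Real.exp (-t ^ 2 / 2) * (p' - t * p t)) t := by
  have h : HasDerivAt (fun t : ℝ => -t ^ 2 / 2) (-t) t := by
    refine ((hasDerivAt_pow 2 t).neg.div_const 2).congr_deriv ?_
    push_cast
    ring
  exact (h.exp.mul hp).congr_deriv (by ring)

lemma integrableOn_exp_neg_sq_div_two_mul_inv_pow {z : ℝ} (hz : 0 < z) (k : ℕ) :
    IntegrableOn (fun t => Real.exp (-t ^ 2 / 2) * t⁻¹ ^ k) (Ioi z) := by
  have hbdd : ∀ᵐ t ∂volume.restrict (Ioi z), ‖t⁻¹ ^ k‖ ≤ z⁻¹ ^ k := by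
    filter_upwards [ae_restrict_mem measurableSet_Ioi] with t (ht : z < t)
    rw [norm_pow, Real.norm_of_nonneg (inv_nonneg.mpr (hz.trans ht).le)]
    exact pow_le_pow_left₀ (inv_nonneg.mpr (hz.trans ht).le) (inv_anti₀ hz ht.le) k
  exact (integrable_exp_neg_sq_div_two.integrableOn.bdd_mul
    (measurable_inv.pow_const k).aestronglyMeasurable hbdd).congr
    (ae_of_all _ fun t => mul_comm _ _)

lemma le_millsRatio {z : ℝ} (hz : 0 < z) : z⁻¹ - z⁻¹ ^ 3 ≤ millsRatio z := by
  rw [millsRatio, le_div_iff₀' (Real.exp_pos _)]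
  refine le_setIntegral_Ioi_of_hasDerivAt (g := fun t => Real.exp (-t ^ 2 / 2) * (t⁻¹ - t⁻¹ ^ 3))
    (g' := fun t => Real.exp (-t ^ 2 / 2) * (3 * t⁻¹ ^ 4 - 1))
    (fun t ht => ?_) ?_ ?_ integrable_exp_neg_sq_div_two.integrableOn (fun t ht => ?_)
  · have ht0 : t ≠ 0 := (hz.trans_le ht).ne'
    refine (hasDerivAt_exp_neg_sq_div_two_mul
      ((hasDerivAt_inv ht0).sub ((hasDerivAt_inv ht0).pow 3))).congr_deriv ?_
    simp only [Pi.sub_apply, Pi.pow_apply, inv_pow]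
    field_simp
    ring
  · refine IntegrableOn.congr_fun
      (((integrableOn_exp_neg_sq_div_two_mul_inv_pow hz 4).const_mul 3).sub
        integrable_exp_neg_sq_div_two.integrableOn) (fun t _ => ?_) measurableSet_Ioi
    simp only [Pi.sub_apply]
    ring
  · simpa using tendsto_exp_neg_sq_div_two_atTop.mul
      (tendsto_inv_atTop_zero.sub (tendsto_inv_atTop_zero.pow 3))
  · have : 0 ≤ Real.exp (-t ^ 2 / 2) * t⁻¹ ^ 4 := by positivity
    linear_combination 3 * this

lemma millsRatio_le {z : ℝ} (hz : 0 < z) : millsRatio z ≤ z⁻¹ - z⁻¹ ^ 3 + 3 * z⁻¹ ^ 5 := by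
  rw [millsRatio, div_le_iff₀' (Real.exp_pos _)]
  refine setIntegral_Ioi_le_of_hasDerivAt
    (g := fun t => Real.exp (-t ^ 2 / 2) * (t⁻¹ - t⁻¹ ^ 3 + 3 * t⁻¹ ^ 5))
    (g' := fun t => -(Real.exp (-t ^ 2 / 2) * (1 + 15 * t⁻¹ ^ 6)))
    (fun t ht => ?_) ?_ ?_ integrable_exp_neg_sq_div_two.integrableOn (fun t ht => ?_)
  · have ht0 : t ≠ 0 := (hz.trans_le ht).ne'
    refine (hasDerivAt_exp_neg_sq_div_two_mul (((hasDerivAt_inv ht0).sub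
      ((hasDerivAt_inv ht0).pow 3)).add (((hasDerivAt_inv ht0).pow 5).const_mul 3))).congr_deriv ?_
    simp only [Pi.sub_apply, Pi.add_apply, Pi.pow_apply, inv_pow]
    field_simp
    ring
  · refine IntegrableOn.congr_fun (integrable_exp_neg_sq_div_two.integrableOn.add
      ((integrableOn_exp_neg_sq_div_two_mul_inv_pow hz 6).const_mul 15)).neg
      (fun t _ => ?_) measurableSet_Ioi
    simp only [Pi.neg_apply, Pi.add_apply]
    ring
  · simpa using tendsto_exp_neg_sq_div_two_atTop.mul ((tendsto_inv_atTop_zero.sub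
      (tendsto_inv_atTop_zero.pow 3)).add ((tendsto_inv_atTop_zero.pow 5).const_mul 3))
  · have : 0 ≤ Real.exp (-t ^ 2 / 2) * t⁻¹ ^ 6 := by positivity
    linear_combination 15 * this

lemma tendsto_sq_mul_one_sub_mul_millsRatio :
    Tendsto (fun z => z ^ 2 * (1 - z * millsRatio z)) atTop (𝓝 1) := by
  have hlow : Tendsto (fun z : ℝ => 1 - 3 * z⁻¹ ^ 2) atTop (𝓝 1) := by
    simpa using (((tendsto_inv_atTop_zero (𝕜 := ℝ)).pow 2).const_mul 3).const_sub 1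
  refine tendsto_of_tendsto_of_tendsto_of_le_of_le' hlow tendsto_const_nhds ?_ ?_
  all_goals filter_upwards [eventually_gt_atTop 0] with z hz
  · calc 1 - 3 * z⁻¹ ^ 2 = z ^ 2 * (1 - z * (z⁻¹ - z⁻¹ ^ 3 + 3 * z⁻¹ ^ 5)) := by
          field_simp
          ring
      _ ≤ z ^ 2 * (1 - z * millsRatio z) := by gcongr; exact millsRatio_le hz
  · calc z ^ 2 * (1 - z * millsRatio z) ≤ z ^ 2 * (1 - z * (z⁻¹ - z⁻¹ ^ 3)) := by
          gcongr; exact le_millsRatio hz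
      _ = 1 := by
          field_simp
          ring

lemma tendsto_mul_millsRatio : Tendsto (fun z => z * millsRatio z) atTop (𝓝 1) := by
  have h := tendsto_sq_mul_one_sub_mul_millsRatio.mul (tendsto_inv_atTop_zero.pow 2)
  rw [zero_pow two_ne_zero, mul_zero] at h
  have h' : Tendsto (fun z => 1 - z * millsRatio z) atTop (𝓝 0) := by
    refine h.congr' ?_
    filter_upwards [eventually_ne_atTop 0] with z hz
    field_simp
  simpa using h'.const_sub 1

lemma condMean_eq_inv_millsRatio_sub (z : ℝ) : condMean z = (millsRatio z)⁻¹ - z := by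
  rw [millsRatio, inv_div]
  rfl

lemma tendsto_mul_condMean : Tendsto (fun z => z * condMean z) atTop (𝓝 1) := by
  have h := tendsto_sq_mul_one_sub_mul_millsRatio.div tendsto_mul_millsRatio one_ne_zero
  rw [div_one] at h
  refine h.congr' ?_
  filter_upwards [eventually_gt_atTop 0] with z hz
  have hM : millsRatio z ≠ 0 := (div_pos (gaussTail_pos z) (Real.exp_pos _)).ne'
  rw [Pi.div_apply, condMean_eq_inv_millsRatio_sub]
  field_simp

lemma gaussTail_add_div_gaussTail {z a : ℝ} (hz : z ≠ 0) (hw : a + z ≠ 0) :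
    gaussTail (a + z) / gaussTail z = Real.exp (-(z * a) - a ^ 2 / 2) *
      ((a + z) * millsRatio (a + z) / (z * millsRatio z)) * (z / (a + z)) := by
  have hexp : Real.exp (-(a + z) ^ 2 / 2) =
      Real.exp (-z ^ 2 / 2) * Real.exp (-(z * a) - a ^ 2 / 2) := by
    rw [← Real.exp_add]
    ring_nf
  have := (gaussTail_pos z).ne'
  simp only [millsRatio, hexp]
  field_simp

lemma tendsto_gaussTail_add_div_gaussTail {a : ℝ → ℝ} {x : ℝ}
    (ha : Tendsto (fun z => z * a z) atTop (𝓝 x)) :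
    Tendsto (fun z => gaussTail (a z + z) / gaussTail z) atTop (𝓝 (Real.exp (-x))) := by
  have ha0 : Tendsto a atTop (𝓝 0) := by
    have h := ha.mul tendsto_inv_atTop_zero
    rw [mul_zero] at h
    refine h.congr' ?_
    filter_upwards [eventually_ne_atTop 0] with z hz
    field_simp
  have hw : Tendsto (fun z => a z + z) atTop atTop := ha0.add_atTop tendsto_id
  have hexp : Tendsto (fun z => Real.exp (-(z * a z) - a z ^ 2 / 2)) atTop (𝓝 (Real.exp (-x))) :=
    (Real.continuous_exp.tendsto _).comp (by simpa using ha.neg.sub ((ha0.pow 2).div_const 2))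
  have hmills : Tendsto (fun z => (a z + z) * millsRatio (a z + z) / (z * millsRatio z))
      atTop (𝓝 1) := by
    have h := (tendsto_mul_millsRatio.comp hw).div tendsto_mul_millsRatio one_ne_zero
    rwa [div_one] at h
  have hfrac : Tendsto (fun z => z / (a z + z)) atTop (𝓝 1) := by
    have h := ((ha0.mul tendsto_inv_atTop_zero).const_add 1).inv₀ (by norm_num)
    simp only [mul_zero, add_zero, inv_one] at h
    refine h.congr' ?_
    filter_upwards [eventually_ne_atTop 0] with z hz
    field_simp
    ring
  have h := (hexp.mul hmills).mul hfrac
  rw [mul_one, mul_one] at h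
  refine h.congr' ?_
  filter_upwards [eventually_ne_atTop 0, hw.eventually_ne_atTop 0] with z hz hwz
  exact (gaussTail_add_div_gaussTail hz hwz).symm

lemma setIntegral_Ioi_condDens (z a : ℝ) :
    ∫ t in Ioi a, condDens z t = gaussTail (a + z) / gaussTail z := by
  have hshift := (measurePreserving_add_right volume z).setIntegral_preimage_emb
    (measurableEmbedding_addRight z) (fun t => Real.exp (-t ^ 2 / 2)) (Ioi (a + z))
  rw [preimage_add_const_Ioi, add_sub_cancel_right] at hshift
  rw [gaussTail, ← hshift, ← integral_div]
  rfl

/-- `X_z / m z` converges in distribution, as `z → ∞`, to the mean-one exponential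
variable: the survival functions converge pointwise. -/
theorem condDens_rescaled_tendsto_exponential :
    ∀ x : ℝ, 0 ≤ x →
      Tendsto (fun z : ℝ => ∫ t in Set.Ioi (x * condMean z), condDens z t)
        atTop (nhds (Real.exp (-x))) := by
  intro x _
  have h : Tendsto (fun z => z * (x * condMean z)) atTop (𝓝 x) := by
    simpa [mul_left_comm] using tendsto_mul_condMean.const_mul x
  simpa only [setIntegral_Ioi_condDens] using tendsto_gaussTail_add_div_gaussTail h
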